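/- arXiv:1904.02799 — 2 statements merged into one kernel-verified Lean document; each statement's English description precedes it below -/
import Mathlib

section
/- If a graph G contains a proper induced cycle C containing at most two vertices of degree (in G) greater than two, then G can be partitioned into two proper induced subgraphs H_1 and H_2 such that α(G) = α(H_1) + α(H_2). -/
open Relation

variable {V : Type*}

/-- `u` and `v` are adjacent in the digraph with arc relation `A`. -/
def DAdj (A : V → V → Prop) (u v : V) : Prop := A u v ∨ A v u

/-- `v` is a source: no arc enters `v`. -/
def IsSource (A : V → V → Prop) (v : V) : Prop := ∀ u, ¬ A u v

/-- `v` is a sink: no arc leaves `v`. -/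
def IsSink (A : V → V → Prop) (v : V) : Prop := ∀ u, ¬ A v u

/-- A stable (independent) set of the digraph. -/
def IsStable (A : V → V → Prop) (S : Set V) : Prop :=
  ∀ u ∈ S, ∀ v ∈ S, u ≠ v → ¬ DAdj A u v

/-- The stability number. -/
noncomputable def alphaNum (A : V → V → Prop) : ℕ :=
  sSup {n | ∃ S : Set V, IsStable A S ∧ S.ncard = n}

/-- A maximum stable set. -/
def IsMaxStable (A : V → V → Prop) (S : Set V) : Prop :=
  IsStable A S ∧ ∀ T : Set V, IsStable A T → T.ncard ≤ S.ncard

/-- A (nonempty) directed path, given as its list of vertices. -/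
def IsDiPath (A : V → V → Prop) (l : List V) : Prop :=
  l ≠ [] ∧ l.Nodup ∧ l.Chain' A

/-- A path partition of the digraph: every vertex lies on exactly one of the paths. -/
def IsPathPartition (A : V → V → Prop) (P : Set (List V)) : Prop :=
  (∀ l ∈ P, IsDiPath A l) ∧ ∀ v : V, ∃! l, l ∈ P ∧ v ∈ l

/-- An `S`-path partition: each path contains exactly one vertex of `S`. -/
def IsSPartition (A : V → V → Prop) (S : Set V) (P : Set (List V)) : Prop :=
  IsPathPartition A P ∧ ∀ l ∈ P, ∃! s, s ∈ l ∧ s ∈ S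

/-- An `S`-BE-path partition: each path contains exactly one vertex of `S`,
which is moreover an endpoint of the path. -/
def IsBEPartition (A : V → V → Prop) (S : Set V) (P : Set (List V)) : Prop :=
  IsSPartition A S P ∧
    ∀ l ∈ P, ∀ s ∈ l, s ∈ S → l.head? = some s ∨ l.getLast? = some s

/-- The α-property: every maximum stable set admits an `S`-path partition. -/
def AlphaProperty (A : V → V → Prop) : Prop :=
  ∀ S : Set V, IsMaxStable A S → ∃ P, IsSPartition A S P

/-- The BE-property: every maximum stable set admits an `S`-BE-path partition. -/
def BEProperty (A : V → V → Prop) : Prop :=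
  ∀ S : Set V, IsMaxStable A S → ∃ P, IsBEPartition A S P

/-- α-diperfect: every induced subdigraph satisfies the α-property. -/
def AlphaDiperfect (A : V → V → Prop) : Prop :=
  ∀ W : Set V, AlphaProperty (fun a b : W => A a.1 b.1)

/-- BE-diperfect: every induced subdigraph satisfies the BE-property. -/
def BEDiperfect (A : V → V → Prop) : Prop :=
  ∀ W : Set V, BEProperty (fun a b : W => A a.1 b.1)

/-- Mutual reachability. -/
def MutReach (A : V → V → Prop) (u v : V) : Prop :=
  ReflTransGen A u v ∧ ReflTransGen A v u

/-- Semicomplete digraph: any two distinct vertices are adjacent. -/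
def Semicomplete (A : V → V → Prop) : Prop :=
  ∀ u v : V, u ≠ v → DAdj A u v

/-- Strongly connected digraph. -/
def Strong (A : V → V → Prop) : Prop :=
  ∀ u v : V, ReflTransGen A u v

/-- The digraph has an induced transitive triangle. -/
def HasInducedTransitiveTriangle (A : V → V → Prop) : Prop :=
  ∃ a b c : V, a ≠ b ∧ a ≠ c ∧ b ≠ c ∧
    A a b ∧ A a c ∧ A c b ∧ ¬ A b a ∧ ¬ A c a ∧ ¬ A b c

/-- The digraph is a blocking odd cycle: its underlying graph is an odd cycle
`x_1 x_2 ⋯ x_{2k+1} x_1` (with `k ≥ 1`; here `x i` is `x_{i+1}`), and both `x_1`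
and `x_2` are each a source or a sink. -/
def IsBlockingOddCycle (A : V → V → Prop) : Prop :=
  ∃ (k : ℕ) (x : ZMod (2 * k + 1) → V), 1 ≤ k ∧ Function.Bijective x ∧
    (∀ i j, DAdj A (x i) (x j) ↔ (j = i + 1 ∨ i = j + 1)) ∧
    (IsSource A (x 0) ∨ IsSink A (x 0)) ∧
    (IsSource A (x 1) ∨ IsSink A (x 1))

/-- The digraph is an anti-directed odd cycle: its underlying graph is an odd cycle
`x_1 ⋯ x_{2k+1} x_1` with `k ≥ 2` (here `x m` is `x_{m+1}`), and each of
`x_1, x_2, x_3, x_4, x_6, x_8, …, x_{2k}` is a source or a sink. -/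
def IsAntiDirectedOddCycle (A : V → V → Prop) : Prop :=
  ∃ (k : ℕ) (x : ZMod (2 * k + 1) → V), 2 ≤ k ∧ Function.Bijective x ∧
    (∀ i j, DAdj A (x i) (x j) ↔ (j = i + 1 ∨ i = j + 1)) ∧
    ∀ m : ℕ, m ≤ 2 * k →
      (m ≤ 3 ∨ (5 ≤ m ∧ m ≤ 2 * k - 1 ∧ Odd m)) →
      (IsSource A (x (m : ZMod (2 * k + 1))) ∨ IsSink A (x (m : ZMod (2 * k + 1))))

/-- `v` is a universal vertex. -/
def IsUniversal (A : V → V → Prop) (v : V) : Prop := ∀ u, u ≠ v → DAdj A u v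

/-- The underlying simple graph of a digraph. -/
def underlyingGraph (A : V → V → Prop) : SimpleGraph V where
  Adj u v := u ≠ v ∧ DAdj A u v
  symm := ⟨fun _ _ h => ⟨h.1.symm, h.2.symm⟩⟩
  loopless := ⟨fun _ h => h.1 rfl⟩

/-- The underlying graph of the digraph is a cycle. -/
def UnderlyingIsCycle (A : V → V → Prop) : Prop :=
  ∃ (n : ℕ) (x : ZMod n → V), 3 ≤ n ∧ Function.Bijective x ∧
    ∀ i j, DAdj A (x i) (x j) ↔ (j = i + 1 ∨ i = j + 1)

/-- A perfect graph: every induced subgraph has chromatic number equal to its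
clique number. -/
def GraphPerfect (G : SimpleGraph V) : Prop :=
  ∀ W : Set V, (G.induce W).chromaticNumber = ((G.induce W).cliqueNum : ℕ∞)

/-- A Hamilton directed path whose endpoints are `{s, t}` (in some order). -/
def HamiltonPathBetween (A : V → V → Prop) (s t : V) : Prop :=
  ∃ l : List V, IsDiPath A l ∧ (∀ v : V, v ∈ l) ∧
    ((l.head? = some s ∧ l.getLast? = some t) ∨
      (l.head? = some t ∧ l.getLast? = some s))

/-- A Hamilton directed path starting at `s` and ending at `t`. -/
def HamiltonPathFromTo (A : V → V → Prop) (s t : V) : Prop :=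
  ∃ l : List V, IsDiPath A l ∧ (∀ v : V, v ∈ l) ∧
    l.head? = some s ∧ l.getLast? = some t

/-- The exceptional strong semicomplete digraph on four vertices
(`a,b,c,d = 0,1,2,3`): the 4-cycle `a→d→c→b→a` together with digons `a↔c`, `b↔d`. -/
def BadFour : Fin 4 → Fin 4 → Prop := fun u v =>
  (u, v) ∈ ({(0,3), (3,2), (2,1), (1,0), (0,2), (2,0), (1,3), (3,1)} :
    Set (Fin 4 × Fin 4))

/-- A locally in-semicomplete digraph: any two in-neighbours of a vertex are adjacent. -/
def LocallyInSemicomplete (A : V → V → Prop) : Prop :=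
  ∀ v u w : V, A u v → A w v → u ≠ w → DAdj A u w

/-- A strong component: a maximal set of pairwise mutually reachable vertices. -/
def IsStrongComponent (A : V → V → Prop) (X : Set V) : Prop :=
  X.Nonempty ∧ (∀ u ∈ X, ∀ v ∈ X, MutReach A u v) ∧
    ∀ u v, v ∈ X → MutReach A u v → u ∈ X

/-- `C` is the vertex set of an induced cycle of `G`. -/
def InducedCycleSet (G : SimpleGraph V) (C : Set V) : Prop :=
  ∃ (n : ℕ) (x : ZMod n → V), 3 ≤ n ∧ Function.Injective x ∧ Set.range x = C ∧
    ∀ i j, G.Adj (x i) (x j) ↔ (j = i + 1 ∨ i = j + 1)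

/-- `G` contains a subdivision of `K₄`: four branch vertices joined by
pairwise internally disjoint paths. -/
def HasK4Subdivision (G : SimpleGraph V) : Prop :=
  ∃ (b : Fin 4 → V) (P : ∀ i j : Fin 4, G.Walk (b i) (b j)),
    Function.Injective b ∧
    (∀ i j, i ≠ j → (P i j).IsPath) ∧
    (∀ i j m, i ≠ j → b m ∈ (P i j).support → m = i ∨ m = j) ∧
    (∀ i j k l, i ≠ j → k ≠ l → ({i, j} : Finset (Fin 4)) ≠ {k, l} →
      ∀ v, v ∈ (P i j).support → v ∈ (P k l).support →
        (v = b i ∨ v = b j) ∧ (v = b k ∨ v = b l))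

/-- 2-connected: connected, at least 3 vertices, and no cut vertex. -/
def TwoConnected (G : SimpleGraph V) : Prop :=
  G.Connected ∧ 3 ≤ Nat.card V ∧
    ∀ v : V, (G.induce {u | u ≠ v}).Preconnected

/-!
For every `H`, `α(G) ≤ α(G[H]) + α(G - H)`, so it suffices to enlarge each independent set `T`
of `G - H` by `α(G[H])` vertices of `H`. Number the cycle `x 0, …, x (n - 1)` so that its branch
vertices (degree greater than two) are among `x 0` and `x d`.

If `d` is even, which can be arranged when `n` is odd by numbering from the other branch vertex,
take `H = C`: the odd positions form a maximum independent set of `C` avoiding the branch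
vertices, and all their neighbours lie on `C`.

Otherwise `n` is even and both threads between `x 0` and `x d` (paths whose inner vertices have
degree two) have an even number of inner vertices; let `H` be the inner vertices of one of them.
If `T` misses an end of that thread, every other vertex of `H`, starting next to that end, can be
added to `T`. If `T` contains both ends, it meets the other thread in fewer vertices than an
alternating set does, so `T` can be traded on that thread for an independent set of the same size
missing `x 0`.
-/

notation "α[" G "; " H "]" => alphaNum (fun a b : Set.Elem H => SimpleGraph.Adj G (Subtype.val a) (Subtype.val b))

def HasAlphaPartition (G : SimpleGraph V) : Prop :=
  ∃ H : Set V, H.Nonempty ∧ Hᶜ.Nonempty ∧ alphaNum G.Adj = α[G; H] + α[G; Hᶜ]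

section AlphaNum

variable [Finite V] {A : V → V → Prop}

lemma bddAbove_ncard_isStable (A : V → V → Prop) :
    BddAbove {n | ∃ S : Set V, IsStable A S ∧ S.ncard = n} :=
  ⟨Nat.card V, fun _ ⟨S, _, hS⟩ => hS ▸ Set.ncard_le_card S⟩

lemma IsStable.ncard_le_alphaNum {S : Set V} (h : IsStable A S) : S.ncard ≤ alphaNum A :=
  le_csSup (bddAbove_ncard_isStable A) ⟨S, h, rfl⟩

lemma exists_isStable_ncard_eq_alphaNum (A : V → V → Prop) :
    ∃ S : Set V, IsStable A S ∧ S.ncard = alphaNum A :=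
  Nat.sSup_mem (s := {n | ∃ S : Set V, IsStable A S ∧ S.ncard = n})
    ⟨0, ∅, by simp [IsStable]⟩ (bddAbove_ncard_isStable A)

end AlphaNum

namespace SimpleGraph

variable {G : SimpleGraph V}

lemma isStable_adj_iff {S : Set V} : IsStable G.Adj S ↔ G.IsIndepSet S := by
  simp only [IsStable, DAdj, IsIndepSet, Set.Pairwise, G.adj_comm _ _, or_self]

lemma isStable_induce_iff {H : Set V} {S : Set H} :
    IsStable (fun a b : H => G.Adj a.1 b.1) S ↔ G.IsIndepSet (Subtype.val '' S) := by
  simp only [IsStable, DAdj, IsIndepSet, Set.Pairwise, Set.forall_mem_image, G.adj_comm _ _,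
    or_self, Subtype.val_injective.ne_iff]

lemma IsIndepSet.union {W T : Set V} (hW : G.IsIndepSet W) (hT : G.IsIndepSet T)
    (hWT : ∀ w ∈ W, ∀ t ∈ T, ¬ G.Adj w t) : G.IsIndepSet (W ∪ T) :=
  Set.pairwise_union.2
    ⟨hW, hT, fun w hw t ht _ => ⟨hWT w hw t ht, fun h => hWT w hw t ht h.symm⟩⟩

lemma eq_or_eq_of_adj_of_ncard_neighborSet_le_two [Finite V] {v a b w : V} (hab : a ≠ b)
    (ha : G.Adj v a) (hb : G.Adj v b) (hdeg : (G.neighborSet v).ncard ≤ 2)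
    (hw : G.Adj v w) : w = a ∨ w = b := by
  have hN : {a, b} = G.neighborSet v :=
    Set.eq_of_subset_of_ncard_le (by rintro _ (rfl | rfl) <;> assumption)
      (by rwa [Set.ncard_pair hab]) (Set.toFinite _)
  have hw' : w ∈ G.neighborSet v := hw
  simpa [← hN] using hw'

/-- `T` contains at most one end of each edge `y i ~ y (σ i)`, so the indices of its vertices and
their images under `σ` are disjoint subsets of `J`. -/
lemma IsIndepSet.two_mul_ncard_le {ι : Type*} {y : ι → V} {σ : ι → ι} (hσ : σ.Injective)
    {I J : Set ι} (hJ : J.Finite) (hIJ : ∀ i ∈ I, i ∈ J ∧ σ i ∈ J)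
    (hadj : ∀ i ∈ I, G.Adj (y i) (y (σ i))) {T : Set V} (hT : G.IsIndepSet T)
    (hTI : T ⊆ y '' I) : 2 * T.ncard ≤ J.ncard := by
  set K := I ∩ y ⁻¹' T
  have hKJ : K ⊆ J := fun i hi => (hIJ i hi.1).1
  have hK : K.Finite := hJ.subset hKJ
  have hTK : T.ncard ≤ K.ncard :=
    calc T.ncard ≤ (y '' K).ncard := Set.ncard_le_ncard (fun t ht => by
            obtain ⟨i, hi, rfl⟩ := hTI ht
            exact ⟨i, ⟨hi, ht⟩, rfl⟩) (hK.image y)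
      _ ≤ K.ncard := Set.ncard_image_le hK
  have hdisj : Disjoint K (σ '' K) := by
    rw [Set.disjoint_right]
    rintro _ ⟨i, hi, rfl⟩ hσi
    exact hT hi.2 hσi.2 (hadj i hi.1).ne (hadj i hi.1)
  calc 2 * T.ncard ≤ K.ncard + (σ '' K).ncard := by
        rw [Set.ncard_image_of_injective _ hσ]; omega
    _ = (K ∪ σ '' K).ncard := (Set.ncard_union_eq hdisj hK (hK.image σ)).symm
    _ ≤ J.ncard := Set.ncard_le_ncard
        (Set.union_subset hKJ (by rintro _ ⟨i, hi, rfl⟩; exact (hIJ i hi.1).2)) hJ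

variable [Finite V]

lemma IsIndepSet.ncard_le_alphaNum {S : Set V} (hS : G.IsIndepSet S) :
    S.ncard ≤ alphaNum G.Adj :=
  (isStable_adj_iff.2 hS).ncard_le_alphaNum

lemma IsIndepSet.ncard_add_ncard_le_alphaNum {W T : Set V} (hW : G.IsIndepSet W)
    (hT : G.IsIndepSet T) (hWT : Disjoint W T) (hadj : ∀ w ∈ W, ∀ t ∈ T, ¬ G.Adj w t) :
    W.ncard + T.ncard ≤ alphaNum G.Adj := by
  rw [← Set.ncard_union_eq hWT]
  exact (hW.union hT hadj).ncard_le_alphaNum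

lemma IsIndepSet.ncard_le_alphaNum_induce {H S : Set V} (hS : G.IsIndepSet S) (hSH : S ⊆ H) :
    S.ncard ≤ α[G; H] := by
  have hS' : IsStable (fun a b : H => G.Adj a.1 b.1) (Subtype.val ⁻¹' S) := by
    rwa [isStable_induce_iff, Subtype.image_preimage_coe, Set.inter_eq_right.2 hSH]
  rw [← Set.ncard_preimage_of_injective_subset_range (f := (Subtype.val : H → V))
    Subtype.val_injective (by simpa using hSH)]
  exact hS'.ncard_le_alphaNum

lemma exists_isIndepSet_ncard_eq_alphaNum_induce (G : SimpleGraph V) (H : Set V) :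
    ∃ S ⊆ H, G.IsIndepSet S ∧ S.ncard = α[G; H] := by
  obtain ⟨S, hS, hcard⟩ := exists_isStable_ncard_eq_alphaNum (fun a b : H => G.Adj a.1 b.1)
  refine ⟨Subtype.val '' S, by simp, isStable_induce_iff.1 hS, ?_⟩
  rw [Set.ncard_image_of_injective _ Subtype.val_injective, hcard]

lemma alphaNum_induce_eq {H W : Set V} (hW : G.IsIndepSet W) (hWH : W ⊆ H)
    (hmax : ∀ S ⊆ H, G.IsIndepSet S → S.ncard ≤ W.ncard) : α[G; H] = W.ncard := by
  refine le_antisymm ?_ (hW.ncard_le_alphaNum_induce hWH)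
  obtain ⟨S, hSH, hS, hcard⟩ := exists_isIndepSet_ncard_eq_alphaNum_induce G H
  exact hcard ▸ hmax S hSH hS

lemma alphaNum_eq_add_compl {H : Set V}
    (hext : ∀ T ⊆ Hᶜ, G.IsIndepSet T → α[G; H] + T.ncard ≤ alphaNum G.Adj) :
    alphaNum G.Adj = α[G; H] + α[G; Hᶜ] := by
  refine le_antisymm ?_ ?_
  · obtain ⟨S, hS, hcard⟩ := exists_isStable_ncard_eq_alphaNum G.Adj
    rw [isStable_adj_iff] at hS
    calc alphaNum G.Adj = (S ∩ H ∪ S ∩ Hᶜ).ncard := by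
          rw [← Set.inter_union_distrib_left, Set.union_compl_self, Set.inter_univ, hcard]
      _ ≤ (S ∩ H).ncard + (S ∩ Hᶜ).ncard := Set.ncard_union_le _ _
      _ ≤ α[G; H] + α[G; Hᶜ] := add_le_add
          (IsIndepSet.ncard_le_alphaNum_induce (hS.mono Set.inter_subset_left)
            Set.inter_subset_right)
          (IsIndepSet.ncard_le_alphaNum_induce (hS.mono Set.inter_subset_left)
            Set.inter_subset_right)
  · obtain ⟨T, hTH, hT, hcard⟩ := exists_isIndepSet_ncard_eq_alphaNum_induce G Hᶜ
    exact hcard ▸ hext T hTH hT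

end SimpleGraph

def everyOther (s m : ℕ) : Set ℕ := (fun i => s + 2 * i) '' Set.Iio m

lemma mem_everyOther {s m k : ℕ} :
    k ∈ everyOther s m ↔ s ≤ k ∧ k < s + 2 * m ∧ (k - s) % 2 = 0 := by
  constructor
  · rintro ⟨i, hi, rfl⟩
    simp only [Set.mem_Iio] at hi
    beta_reduce
    omega
  · rintro ⟨h₁, h₂, h₃⟩
    exact ⟨(k - s) / 2, by simp only [Set.mem_Iio]; omega, by beta_reduce; omega⟩

lemma ncard_everyOther (s m : ℕ) : (everyOther s m).ncard = m := by
  rw [everyOther, Set.ncard_image_of_injective _ fun i j h => by omega,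
    Set.ncard_Iio_nat]

open Set SimpleGraph

structure IsThread (G : SimpleGraph V) (y : ℕ → V) (a c : ℕ) : Prop where
  adj : ∀ k, a ≤ k → k < c → G.Adj (y k) (y (k + 1))
  injOn : InjOn y (Icc a c)
  ncard_neighborSet_le : ∀ k ∈ Ioo a c, (G.neighborSet (y k)).ncard ≤ 2

namespace IsThread

variable {G : SimpleGraph V} {y : ℕ → V} {a c : ℕ}

lemma ncard_image (hy : IsThread G y a c) {F : Set ℕ} (hF : F ⊆ Icc a c) :
    (y '' F).ncard = F.ncard :=
  (hy.injOn.mono hF).ncard_image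

lemma two_mul_ncard_le (hy : IsThread G y a c) {T : Set V} (hT : G.IsIndepSet T) {s e : ℕ}
    (has : a ≤ s) (hec : e < c) (hTs : T ⊆ y '' Icc s e) : 2 * T.ncard ≤ e + 2 - s := by
  have := hT.two_mul_ncard_le (σ := (· + 1)) (add_left_injective 1) (finite_Icc s (e + 1))
    (fun k hk => by simp only [mem_Icc] at hk ⊢; omega)
    (fun k hk => by simp only [mem_Icc] at hk; exact hy.adj k (by omega) (by omega))
    hTs
  simpa only [ncard_Icc_nat, show e + 1 + 1 = e + 2 by rfl] using this

lemma two_mul_ncard_inter_inner_add_two_le (hy : IsThread G y a c) (hac : a < c) {T : Set V}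
    (hT : G.IsIndepSet T) (ha : y a ∈ T) (hc : y c ∈ T) :
    2 * (T ∩ y '' Ioo a c).ncard + 2 ≤ c - a := by
  have hlast : ∀ k, a ≤ k → k + 1 = c → y k ∉ T := fun k hak hkc ht => by
    have h := hy.adj k hak (by omega)
    rw [hkc] at h
    exact hT ht hc h.ne h
  have hc' : a + 1 < c := by
    by_contra h
    exact hlast a le_rfl (by omega) ha
  have hsub : T ∩ y '' Ioo a c ⊆ y '' Icc (a + 2) (c - 2) := by
    rintro _ ⟨ht, k, hk, rfl⟩
    simp only [mem_Ioo] at hk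
    have h₁ : k ≠ a + 1 := by
      rintro rfl
      exact hT ha ht (hy.adj a le_rfl (by omega)).ne (hy.adj a le_rfl (by omega))
    have h₂ : k + 1 ≠ c := fun h => hlast k hk.1.le h ht
    exact ⟨k, by simp only [mem_Icc]; omega, rfl⟩
  have := hy.two_mul_ncard_le (hT.mono inter_subset_left) (by omega : a ≤ a + 2)
    (by omega : c - 2 < c) hsub
  omega

variable [Finite V]

lemma eq_or_eq_of_adj (hy : IsThread G y a c) {k : ℕ} (hk : k ∈ Ioo a c) {v : V}
    (hv : G.Adj (y k) v) : v = y (k - 1) ∨ v = y (k + 1) := by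
  obtain ⟨hak, hkc⟩ := hk
  refine G.eq_or_eq_of_adj_of_ncard_neighborSet_le_two ?_ ?_ (hy.adj k hak.le hkc)
    (hy.ncard_neighborSet_le k ⟨hak, hkc⟩) hv
  · intro h
    have := hy.injOn (by simp only [mem_Icc]; omega) (by simp only [mem_Icc]; omega) h
    omega
  · have := hy.adj (k - 1) (by omega) (by omega)
    rwa [Nat.sub_add_cancel (by omega), G.adj_comm] at this

lemma isIndepSet_image (hy : IsThread G y a c) {F : Set ℕ} (hF : F ⊆ Ioo a c)
    (hF₂ : ∀ k ∈ F, k + 1 ∉ F) : G.IsIndepSet (y '' F) := by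
  rintro _ ⟨k, hk, rfl⟩ _ ⟨l, hl, rfl⟩ - hadj
  have hk' := hF hk
  have hl' := hF hl
  simp only [mem_Ioo] at hk' hl'
  rcases hy.eq_or_eq_of_adj (hF hk) hadj with h | h <;>
    have := hy.injOn (by simp only [mem_Icc]; omega) (by simp only [mem_Icc]; omega) h
  · exact hF₂ l hl (by rwa [this, Nat.sub_add_cancel (by omega)])
  · exact hF₂ k hk (this ▸ hl)

lemma isIndepSet_image_everyOther (hy : IsThread G y a c) {s m : ℕ}
    (hF : everyOther s m ⊆ Ioo a c) : G.IsIndepSet (y '' everyOther s m) :=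
  hy.isIndepSet_image hF fun k hk => by rw [mem_everyOther] at hk ⊢; omega

lemma alphaNum_induce_inner (hy : IsThread G y a c) (hodd : Odd (c - a)) :
    α[G; y '' Ioo a c] = (c - a - 1) / 2 := by
  obtain ⟨j, hj⟩ := hodd
  have hW : everyOther (a + 1) ((c - a - 1) / 2) ⊆ Ioo a c := fun k hk => by
    rw [mem_everyOther] at hk; simp only [mem_Ioo]; omega
  rw [← ncard_everyOther (a + 1) ((c - a - 1) / 2),
    ← hy.ncard_image (hW.trans Ioo_subset_Icc_self)]
  refine alphaNum_induce_eq (hy.isIndepSet_image_everyOther hW) (image_mono hW) fun S hSH hS => ?_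
  rw [hy.ncard_image (hW.trans Ioo_subset_Icc_self), ncard_everyOther]
  have := hy.two_mul_ncard_le hS (s := a + 1) (e := c - 1) (by omega) (by omega)
    (hSH.trans (image_mono fun k hk => by simp only [mem_Ioo, mem_Icc] at hk ⊢; omega))
  omega

lemma ncard_add_ncard_le_alphaNum (hy : IsThread G y a c) {F : Set ℕ} (hF : F ⊆ Ioo a c)
    (hF₂ : ∀ k ∈ F, k + 1 ∉ F) {T : Set V} (hT : G.IsIndepSet T)
    (hTi : Disjoint T (y '' Ioo a c)) (hFT : ∀ k ∈ F, y (k - 1) ∉ T ∧ y (k + 1) ∉ T) :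
    F.ncard + T.ncard ≤ alphaNum G.Adj := by
  rw [← hy.ncard_image (hF.trans Ioo_subset_Icc_self)]
  refine (hy.isIndepSet_image hF hF₂).ncard_add_ncard_le_alphaNum hT
    (hTi.symm.mono_left (image_mono hF)) ?_
  rintro _ ⟨k, hk, rfl⟩ t ht hadj
  rcases hy.eq_or_eq_of_adj (hF hk) hadj with rfl | rfl
  exacts [(hFT k hk).1 ht, (hFT k hk).2 ht]

/-- Every other inner vertex, starting next to an end of the thread missing from `T`, can be
added to `T`. -/
lemma add_ncard_le_alphaNum (hy : IsThread G y a c) (hodd : Odd (c - a)) {T : Set V}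
    (hT : G.IsIndepSet T) (hTi : Disjoint T (y '' Ioo a c)) (hend : y a ∉ T ∨ y c ∉ T) :
    (c - a - 1) / 2 + T.ncard ≤ alphaNum G.Adj := by
  obtain ⟨j, hj⟩ := hodd
  have hinner : ∀ k, a < k → k < c → y k ∉ T := fun k hak hkc ht =>
    disjoint_left.1 hTi ht (mem_image_of_mem y ⟨hak, hkc⟩)
  have key : ∀ s, (s = a + 1 ∨ s = a + 2) → (∀ k ∈ everyOther s ((c - a - 1) / 2),
      y (k - 1) ∉ T ∧ y (k + 1) ∉ T) → (c - a - 1) / 2 + T.ncard ≤ alphaNum G.Adj := by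
    intro s hs hFT
    have := hy.ncard_add_ncard_le_alphaNum (F := everyOther s ((c - a - 1) / 2))
      (fun k hk => by rw [mem_everyOther] at hk; simp only [mem_Ioo]; omega)
      (fun k hk => by rw [mem_everyOther] at hk ⊢; omega) hT hTi hFT
    rwa [ncard_everyOther] at this
  rcases hend with ha | hc
  · refine key (a + 1) (Or.inl rfl) fun k hk => ?_
    rw [mem_everyOther] at hk
    refine ⟨?_, hinner _ (by omega) (by omega)⟩
    rcases (show k - 1 = a ∨ a < k - 1 by omega) with h | h
    · rwa [h]
    · exact hinner _ h (by omega)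
  · refine key (a + 2) (Or.inr rfl) fun k hk => ?_
    rw [mem_everyOther] at hk
    refine ⟨hinner _ (by omega) (by omega), ?_⟩
    rcases (show k + 1 = c ∨ k + 1 < c by omega) with h | h
    · rwa [h]
    · exact hinner _ (by omega) h

/-- The inner vertices of `T` and the end `y c` are traded for every other inner vertex, starting
two steps after `y a`. -/
lemma exists_exchange (hy : IsThread G y a c) (hodd : Odd (c - a)) {T : Set V}
    (hT : G.IsIndepSet T) (ha : y a ∈ T) (hc : y c ∈ T) :
    ∃ T' : Set V,
      G.IsIndepSet T' ∧ T.ncard ≤ T'.ncard ∧ y c ∉ T' ∧ T' ⊆ T ∪ y '' Ioo a c := by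
  obtain ⟨j, hj⟩ := hodd
  have hF : everyOther (a + 2) ((c - a - 1) / 2) ⊆ Ioo a c := fun k hk => by
    rw [mem_everyOther] at hk; simp only [mem_Ioo]; omega
  set Z := y '' everyOther (a + 2) ((c - a - 1) / 2)
  have hZP : Z ⊆ y '' Ioo a c := image_mono hF
  have hZT : Disjoint Z (T \ insert (y c) (y '' Ioo a c)) :=
    disjoint_left.2 fun _ hz h => h.2 (mem_insert_of_mem _ (hZP hz))
  refine ⟨Z ∪ (T \ insert (y c) (y '' Ioo a c)), ?_, ?_, ?_, ?_⟩
  · refine (hy.isIndepSet_image_everyOther hF).union (hT.mono sdiff_subset) ?_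
    rintro _ ⟨k, hk, rfl⟩ t ht hadj
    refine ht.2 ?_
    have hk' := hF hk
    rw [mem_everyOther] at hk
    rcases hy.eq_or_eq_of_adj hk' hadj with rfl | rfl
    · exact mem_insert_of_mem _ ⟨k - 1, by simp only [mem_Ioo]; omega, rfl⟩
    · rcases (show k + 1 = c ∨ k + 1 < c by omega) with h | h
      · rw [h]; exact mem_insert _ _
      · exact mem_insert_of_mem _ ⟨k + 1, by simp only [mem_Ioo]; omega, rfl⟩
  · have hsplit := ncard_inter_add_ncard_sdiff_eq_ncard T (insert (y c) (y '' Ioo a c))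
    have hins : T ∩ insert (y c) (y '' Ioo a c) ⊆ insert (y c) (T ∩ y '' Ioo a c) := by
      rintro v ⟨hv, rfl | hvP⟩
      exacts [mem_insert _ _, mem_insert_of_mem _ ⟨hv, hvP⟩]
    have h₁ := ncard_le_ncard hins (toFinite _)
    have h₂ := ncard_insert_le (y c) (T ∩ y '' Ioo a c)
    have h₃ := hy.two_mul_ncard_inter_inner_add_two_le (by omega) hT ha hc
    rw [ncard_union_eq hZT, hy.ncard_image (hF.trans Ioo_subset_Icc_self), ncard_everyOther]
    omega
  · rintro (⟨k, hk, hkc⟩ | h)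
    · have := hy.injOn (Ioo_subset_Icc_self (hF hk)) (right_mem_Icc.2 (by omega)) hkc
      rw [mem_everyOther] at hk
      omega
    · exact h.2 (mem_insert _ _)
  · exact union_subset (hZP.trans subset_union_right) (sdiff_subset.trans subset_union_left)

end IsThread

lemma ZMod.natCast_injOn_Ico (a n : ℕ) : InjOn (Nat.cast : ℕ → ZMod n) (Ico a (a + n)) := by
  intro k hk l hl h
  simp only [mem_Ico] at hk hl
  exact ((ZMod.natCast_eq_natCast_iff _ _ _).1 h).eq_of_abs_lt (by rw [abs_lt]; omega)

lemma Set.exists_subset_pair_of_ncard_le_two {α : Type*} [Nonempty α] {s : Set α}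
    (hs : s.Finite) (h : s.ncard ≤ 2) : ∃ a b, s ⊆ {a, b} := by
  interval_cases hn : s.ncard
  · rw [ncard_eq_zero hs] at hn
    inhabit α
    exact ⟨default, default, hn ▸ empty_subset _⟩
  · obtain ⟨a, rfl⟩ := ncard_eq_one.1 hn
    exact ⟨a, a, by simp⟩
  · obtain ⟨a, b, -, rfl⟩ := ncard_eq_two.1 hn
    exact ⟨a, b, subset_rfl⟩

structure IsInducedCycle (G : SimpleGraph V) {n : ℕ} (x : ZMod n → V) : Prop where
  three_le : 3 ≤ n
  injective : Function.Injective x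
  adj_iff : ∀ i j, G.Adj (x i) (x j) ↔ (j = i + 1 ∨ i = j + 1)

namespace IsInducedCycle

variable {G : SimpleGraph V} {n : ℕ} {x : ZMod n → V}

lemma comp_add_right (hx : IsInducedCycle G x) (p : ZMod n) :
    IsInducedCycle G (fun i => x (i + p)) where
  three_le := hx.three_le
  injective := hx.injective.comp (add_left_injective p)
  adj_iff i j := by simp only [hx.adj_iff, add_right_comm _ p 1, add_left_inj]

lemma injOn_natCast (hx : IsInducedCycle G x) (a : ℕ) :
    InjOn (fun k : ℕ => x k) (Ico a (a + n)) :=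
  hx.injective.comp_injOn (ZMod.natCast_injOn_Ico a n)

lemma isThread (hx : IsInducedCycle G x) {a c : ℕ} (hc : c < a + n)
    (hdeg : ∀ k ∈ Ioo a c, (G.neighborSet (x k)).ncard ≤ 2) :
    IsThread G (fun k : ℕ => x k) a c where
  adj k _ _ := (hx.adj_iff _ _).2 (Or.inl (Nat.cast_succ k))
  injOn := (hx.injOn_natCast a).mono fun k hk => by simp only [mem_Icc, mem_Ico] at hk ⊢; omega
  ncard_neighborSet_le := hdeg

lemma two_mul_ncard_le (hx : IsInducedCycle G x) {T : Set V} (hT : G.IsIndepSet T)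
    (hTx : T ⊆ range x) : 2 * T.ncard ≤ n := by
  have : NeZero n := ⟨by have := hx.three_le; omega⟩
  simpa [ncard_univ, Nat.card_zmod] using hT.two_mul_ncard_le (add_left_injective 1)
    finite_univ (fun _ _ => ⟨trivial, trivial⟩)
    (fun i _ => (hx.adj_iff i (i + 1)).2 (Or.inl rfl))
    (by rwa [image_univ])

lemma eq_add_one_or_of_adj (hx : IsInducedCycle G x) {k l : ℕ} (hk : k ∈ Icc 1 (n - 1))
    (hl : l ∈ Icc 1 (n - 1)) (h : G.Adj (x k) (x l)) : l = k + 1 ∨ k = l + 1 := by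
  simp only [mem_Icc] at hk hl
  have hinj := ZMod.natCast_injOn_Ico 1 n
  rw [hx.adj_iff, ← Nat.cast_succ, ← Nat.cast_succ] at h
  refine h.imp (fun h => hinj ?_ ?_ h) (fun h => hinj ?_ ?_ h) <;> simp only [mem_Ico] <;> omega

lemma isIndepSet_image (hx : IsInducedCycle G x) {F : Set ℕ} (hF : F ⊆ Icc 1 (n - 1))
    (hF₂ : ∀ k ∈ F, k + 1 ∉ F) : G.IsIndepSet ((fun k : ℕ => x k) '' F) := by
  rintro _ ⟨k, hk, rfl⟩ _ ⟨l, hl, rfl⟩ - hadj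
  rcases hx.eq_add_one_or_of_adj (hF hk) (hF hl) hadj with rfl | rfl
  exacts [hF₂ k hk hl, hF₂ l hl hk]

variable [Finite V]

lemma mem_range_of_adj (hx : IsInducedCycle G x) {i : ZMod n}
    (hdeg : (G.neighborSet (x i)).ncard ≤ 2) {v : V} (hv : G.Adj (x i) v) : v ∈ range x := by
  have hne : i - 1 ≠ i + 1 := fun h => by
    have h₂ : ((2 : ℕ) : ZMod n) = ((0 : ℕ) : ZMod n) := by push_cast; linear_combination -h
    have := ZMod.natCast_injOn_Ico 0 n (by simp only [mem_Ico]; have := hx.three_le; omega)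
      (by simp only [mem_Ico]; have := hx.three_le; omega) h₂
    omega
  rcases G.eq_or_eq_of_adj_of_ncard_neighborSet_le_two (hx.injective.ne hne)
    ((hx.adj_iff _ _).2 (Or.inr (sub_add_cancel i 1).symm)) ((hx.adj_iff _ _).2 (Or.inl rfl))
    hdeg hv with rfl | rfl <;> exact mem_range_self _

lemma hasAlphaPartition_of_even (hx : IsInducedCycle G x) (hC : range x ≠ univ) {d : ℕ}
    (hd : Even d) (hbr : ∀ k < n, k ≠ 0 → k ≠ d → (G.neighborSet (x k)).ncard ≤ 2) :
    HasAlphaPartition G := by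
  have hn := hx.three_le
  obtain ⟨j, rfl⟩ := hd
  have hF : everyOther 1 (n / 2) ⊆ Icc 1 (n - 1) := fun k hk => by
    rw [mem_everyOther] at hk; simp only [mem_Icc]; omega
  set W := (fun k : ℕ => x k) '' everyOther 1 (n / 2)
  have hW : G.IsIndepSet W :=
    hx.isIndepSet_image hF fun k hk => by rw [mem_everyOther] at hk ⊢; omega
  have hWx : W ⊆ range x := by rintro _ ⟨k, -, rfl⟩; exact mem_range_self _
  have hWcard : W.ncard = n / 2 := by
    have hinj : InjOn (fun k : ℕ => x k) (everyOther 1 (n / 2)) :=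
      (hx.injOn_natCast 0).mono fun k hk => by
        have := hF hk; simp only [mem_Icc, mem_Ico] at this ⊢; omega
    rw [hinj.ncard_image, ncard_everyOther]
  have hα : α[G; range x] = n / 2 := hWcard ▸ alphaNum_induce_eq hW hWx fun S hSx hS => by
    have := hx.two_mul_ncard_le hS hSx; omega
  refine ⟨range x, ⟨x 0, mem_range_self 0⟩, nonempty_compl.2 hC,
    alphaNum_eq_add_compl fun T hTx hT => ?_⟩
  rw [hα, ← hWcard]
  refine hW.ncard_add_ncard_le_alphaNum hT (disjoint_compl_right.mono hWx hTx) ?_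
  rintro _ ⟨k, hk, rfl⟩ t ht hadj
  rw [mem_everyOther] at hk
  exact hTx ht (hx.mem_range_of_adj (hbr k (by omega) (by omega) (by omega)) hadj)

lemma hasAlphaPartition_of_odd (hx : IsInducedCycle G x) {d : ℕ} (hd : 3 ≤ d) (hdn : d < n)
    (hdodd : Odd d) (hn : Even n)
    (hbr : ∀ k < n, k ≠ 0 → k ≠ d → (G.neighborSet (x k)).ncard ≤ 2) :
    HasAlphaPartition G := by
  set y : ℕ → V := fun k => x k
  have h₁ : IsThread G y 0 d :=
    hx.isThread (by omega) fun k hk => hbr k (by have := hk.2; omega) hk.1.ne' hk.2.ne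
  have h₂ : IsThread G y d n :=
    hx.isThread (by omega) fun k hk => hbr k hk.2 (by have := hk.1; omega) hk.1.ne'
  have hodd₁ : Odd (d - 0) := by simpa using hdodd
  have hodd₂ : Odd (n - d) := by
    obtain ⟨i, hi⟩ := hdodd
    obtain ⟨j, hj⟩ := hn
    exact ⟨j - i - 1, by omega⟩
  have hyn : y n = y 0 := by simp [y]
  have hdisj : Disjoint (y '' Ioo d n) (y '' Ioo 0 d) := by
    refine disjoint_left.2 fun v ⟨k, hk, hkv⟩ ⟨l, hl, hlv⟩ => ?_
    simp only [mem_Ioo] at hk hl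
    have := hx.injOn_natCast 0 (by simp only [mem_Ico]; omega) (by simp only [mem_Ico]; omega)
      (hkv.trans hlv.symm)
    omega
  refine ⟨y '' Ioo 0 d, ⟨y 1, 1, by simp only [mem_Ioo]; omega, rfl⟩, ⟨y 0, ?_⟩,
    alphaNum_eq_add_compl fun T hTH hT => ?_⟩
  · rintro ⟨k, hk, hk0⟩
    have := h₁.injOn (Ioo_subset_Icc_self hk) (left_mem_Icc.2 (by omega)) hk0
    exact hk.1.ne' this
  rw [h₁.alphaNum_induce_inner hodd₁]
  have hTH' : Disjoint T (y '' Ioo 0 d) := subset_compl_iff_disjoint_right.1 hTH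
  by_cases hend : y 0 ∈ T ∧ y d ∈ T
  · obtain ⟨T', hT', hcard, hnT, hsub⟩ :=
      h₂.exists_exchange hodd₂ hT hend.2 (hyn ▸ hend.1)
    have := h₁.add_ncard_le_alphaNum hodd₁ hT'
      (disjoint_of_subset_left hsub (disjoint_union_left.2 ⟨hTH', hdisj⟩))
      (Or.inl (hyn ▸ hnT))
    omega
  · exact h₁.add_ncard_le_alphaNum hodd₁ hT hTH' (not_and_or.1 hend)

lemma hasAlphaPartition_of_branch (hx : IsInducedCycle G x) (hC : range x ≠ univ)
    {p q : ZMod n} (hbr : ∀ i, 2 < (G.neighborSet (x i)).ncard → i = p ∨ i = q)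
    (hpq : Even (q - p).val ∨ Even n ∧ 3 ≤ (q - p).val) : HasAlphaPartition G := by
  have : NeZero n := ⟨by have := hx.three_le; omega⟩
  have hinj := ZMod.natCast_injOn_Ico 0 n
  have hbr' :
      ∀ k < n, k ≠ 0 → k ≠ (q - p).val → (G.neighborSet (x (k + p))).ncard ≤ 2 := by
    intro k hk hk0 hkd
    refine not_lt.1 fun h => ?_
    rcases hbr _ h with h | h
    · exact hk0 (hinj (by simp only [mem_Ico]; omega) (by simp only [mem_Ico]; omega)
        (by simpa using h))
    · exact hkd (hinj (by simp only [mem_Ico]; omega) (by simp [ZMod.val_lt])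
        (by rw [ZMod.natCast_zmod_val]; exact eq_sub_of_add_eq h))
  rcases Nat.even_or_odd (q - p).val with hd | hd
  · refine (hx.comp_add_right p).hasAlphaPartition_of_even ?_ hd hbr'
    rwa [show range (fun i => x (i + p)) = range x from (Equiv.addRight p).surjective.range_comp x]
  · obtain ⟨hn, hd3⟩ := hpq.resolve_left (Nat.not_even_iff_odd.2 hd)
    exact (hx.comp_add_right p).hasAlphaPartition_of_odd hd3 (ZMod.val_lt _) hd hn hbr'

end IsInducedCycle

/-- If `G` contains a proper induced cycle with at most two vertices of degree greater
than two, then `G` splits into two proper induced subgraphs `H1, H2` with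
`α(G) = α(H1) + α(H2)`. -/
theorem induced_cycle_partition {V : Type*} [Finite V] (G : SimpleGraph V) (C : Set V)
    (hC : InducedCycleSet G C) (hproper : C ≠ Set.univ)
    (hdeg : {v | v ∈ C ∧ 2 < (G.neighborSet v).ncard}.ncard ≤ 2) :
    ∃ H1 H2 : Set V, H1.Nonempty ∧ H2.Nonempty ∧ Disjoint H1 H2 ∧
      H1 ∪ H2 = Set.univ ∧
      alphaNum G.Adj =
        alphaNum (fun a b : H1 => G.Adj a.1 b.1) +
          alphaNum (fun a b : H2 => G.Adj a.1 b.1) := by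
  obtain ⟨n, x, hn, hinj, rfl, hadj⟩ := hC
  have hx : IsInducedCycle G x := ⟨hn, hinj, hadj⟩
  have : NeZero n := ⟨by omega⟩
  obtain ⟨p, q, hpq⟩ : ∃ p q : ZMod n, {i | 2 < (G.neighborSet (x i)).ncard} ⊆ {p, q} := by
    refine exists_subset_pair_of_ncard_le_two (toFinite _) (le_trans ?_ hdeg)
    rw [← ncard_image_of_injective _ hinj]
    exact ncard_le_ncard (by rintro _ ⟨i, hi, rfl⟩; exact ⟨mem_range_self i, hi⟩)
  have hval : (q - p).val = 0 ∨ (q - p).val + (p - q).val = n := by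
    rw [← neg_sub, ZMod.neg_val]
    split_ifs with h
    · simp [h]
    · have := ZMod.val_lt (q - p); omega
  obtain ⟨H, hH, hHc, hα⟩ : HasAlphaPartition G := by
    by_cases h : Even (q - p).val ∨ Even n ∧ 3 ≤ (q - p).val
    · exact hx.hasAlphaPartition_of_branch hproper (fun i hi => hpq hi) h
    · refine hx.hasAlphaPartition_of_branch hproper (fun i hi => Or.symm (hpq hi)) ?_
      simp only [Nat.even_iff] at h ⊢
      omega
  exact ⟨H, Hᶜ, hH, hHc, disjoint_compl_right, union_compl_self H, hα⟩
end

section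
/- If D is a digraph with no induced blocking odd cycle and the underlying graph of D is a cycle, then D is BE-diperfect. -/
open Relation

variable {V : Type*}

/-!
Number the cycle by `ZMod n`. On a proper subset `I` the underlying graph is a disjoint union of
paths. Given a maximum stable set `S` of `I`, pick `i ∈ I` with `i - 1 ∉ I`: maximality puts `i` or
`i + 1` into `S`, so the arc between `i` and `i + 1` (or `i` alone, if `i + 1 ∉ I`) is a dipath
with exactly one vertex of `S`, at an end. As `i` has no neighbour in `I` off this dipath, the rest
of `S` is a maximum stable set of the rest of `I`, and induction applies.

On the whole cycle, a gap `g, g + 1 ∉ S` forces `g - 1, g + 2 ∈ S`. If `g` (or `g + 1`) is neither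
a source nor a sink, the dipath through `g - 1, g, g + 1` (or `g, g + 1, g + 2`) can be split off
as above. Otherwise `g` and `g + 1` make the cycle a blocking odd cycle unless `n` is even, and for
even `n` a gap is impossible: a stable set `T` is disjoint from its shift `T + 1`, so
`2 |T| ≤ n`, strictly if `T` has a gap, while the even vertices give `n / 2`. Without a gap `S`
alternates, `2 |S| = n`, and splitting off the arc between some `g ∈ S` and `g + 1` leaves a path
whose stable sets have fewer than `|S|` elements by the same count.
-/

section Digraph

variable {A : V → V → Prop}

def IsSourceOrSink (A : V → V → Prop) (v : V) : Prop := IsSource A v ∨ IsSink A v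

lemma dAdj_comm {u v : V} : DAdj A u v ↔ DAdj A v u := or_comm

lemma IsStable.mono {S T : Set V} (hS : IsStable A S) (hTS : T ⊆ S) : IsStable A T :=
  fun u hu v hv => hS u (hTS hu) v (hTS hv)

lemma IsStable.insert {T : Set V} (hT : IsStable A T) {w : V} (hw : ∀ u ∈ T, ¬ DAdj A w u) :
    IsStable A (insert w T) := by
  rintro u (rfl | hu) v (rfl | hv) huv
  · exact absurd rfl huv
  · exact hw v hv
  · exact fun h => hw u hu (dAdj_comm.1 h)
  · exact hT u hu v hv huv

structure IsMaxStableIn (A : V → V → Prop) (S U : Set V) : Prop where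
  subset : S ⊆ U
  isStable : IsStable A S
  ncard_le : ∀ T ⊆ U, IsStable A T → T.ncard ≤ S.ncard

/-- An `S`-BE-path partition of the subdigraph induced on `U`, with its paths kept as lists of
vertices of the whole digraph so that `U` can shrink along an induction. -/
structure IsBEPartitionOn (A : V → V → Prop) (S U : Set V) (P : Set (List V)) : Prop where
  isDiPath : ∀ l ∈ P, IsDiPath A l
  mem : ∀ l ∈ P, ∀ v ∈ l, v ∈ U
  existsUnique_path : ∀ v ∈ U, ∃! l, l ∈ P ∧ v ∈ l
  existsUnique_mem : ∀ l ∈ P, ∃! s, s ∈ l ∧ s ∈ S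
  endpoint : ∀ l ∈ P, ∀ s ∈ l, s ∈ S → l.head? = some s ∨ l.getLast? = some s

def BEPropertyOn (A : V → V → Prop) (U : Set V) : Prop :=
  ∀ S, IsMaxStableIn A S U → ∃ P, IsBEPartitionOn A S U P

lemma IsMaxStable.isMaxStableIn_univ {S : Set V} (hS : IsMaxStable A S) :
    IsMaxStableIn A S Set.univ :=
  ⟨Set.subset_univ S, hS.1, fun T _ hT => hS.2 T hT⟩

lemma IsBEPartitionOn.isBEPartition {S : Set V} {P : Set (List V)}
    (hP : IsBEPartitionOn A S Set.univ P) : IsBEPartition A S P :=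
  ⟨⟨⟨hP.isDiPath, fun v => hP.existsUnique_path v trivial⟩, hP.existsUnique_mem⟩, hP.endpoint⟩

lemma IsMaxStableIn.ncard_lt [Finite V] {S U T : Set V} (hS : IsMaxStableIn A S U)
    (hTU : T ⊆ U) (hT : IsStable A T) {w : V} (hwU : w ∈ U) (hwT : w ∉ T)
    (hw : ∀ u ∈ T, ¬ DAdj A w u) : T.ncard < S.ncard := by
  have := hS.ncard_le _ (Set.insert_subset hwU hTU) (hT.insert hw)
  rw [Set.ncard_insert_of_notMem hwT] at this
  omega

lemma IsMaxStableIn.mem_of_forall_not_dAdj [Finite V] {S U : Set V} (hS : IsMaxStableIn A S U)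
    {v : V} (hvU : v ∈ U) (hv : ∀ u ∈ S, ¬ DAdj A v u) : v ∈ S :=
  by_contra fun hvS => (hS.ncard_lt hS.subset hS.isStable hvU hvS hv).false

lemma IsBEPartitionOn.insert {S U L : Set V} {P : Set (List V)} {l : List V} {s : V}
    (hP : IsBEPartitionOn A (S \ {s}) (U \ L) P) (hl : IsDiPath A l) (hlL : ∀ v, v ∈ l ↔ v ∈ L)
    (hLU : L ⊆ U) (hLS : ∀ v ∈ L, v ∈ S ↔ v = s)
    (hend : l.head? = some s ∨ l.getLast? = some s) : IsBEPartitionOn A S U (insert l P) := by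
  have hs : s ∈ l := hend.elim List.mem_of_mem_head? List.mem_of_mem_getLast?
  have hPS : ∀ l' ∈ P, ∀ v, v ∈ l' ∧ v ∈ S \ {s} ↔ v ∈ l' ∧ v ∈ S := by
    refine fun l' hl' v => and_congr_right fun hv => ⟨fun h => h.1, fun h => ⟨h, ?_⟩⟩
    rintro rfl
    exact (hP.mem l' hl' v hv).2 ((hlL v).1 hs)
  refine ⟨?_, ?_, fun v hvU => ?_, ?_, ?_⟩
  · rintro l' (rfl | hl')
    exacts [hl, hP.isDiPath l' hl']
  · rintro l' (rfl | hl') v hv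
    exacts [hLU ((hlL v).1 hv), (hP.mem l' hl' v hv).1]
  · by_cases hvL : v ∈ L
    · refine ⟨l, ⟨Set.mem_insert _ _, (hlL v).2 hvL⟩, ?_⟩
      rintro l' ⟨rfl | hl', hv⟩
      · rfl
      · exact absurd hvL (hP.mem l' hl' v hv).2
    · obtain ⟨l', ⟨hl', hv⟩, huniq⟩ := hP.existsUnique_path v ⟨hvU, hvL⟩
      refine ⟨l', ⟨Set.mem_insert_of_mem _ hl', hv⟩, ?_⟩
      rintro l'' ⟨rfl | hl'', hv''⟩
      · exact absurd ((hlL v).1 hv'') hvL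
      · exact huniq l'' ⟨hl'', hv''⟩
  · rintro l' (rfl | hl')
    · exact ⟨s, ⟨hs, (hLS s ((hlL s).1 hs)).2 rfl⟩,
        fun v ⟨hv, hvS⟩ => (hLS v ((hlL v).1 hv)).1 hvS⟩
    · exact (existsUnique_congr (hPS l' hl')).1 (hP.existsUnique_mem l' hl')
  · rintro l' (rfl | hl') v hv hvS
    · rwa [(hLS v ((hlL v).1 hv)).1 hvS]
    · exact hP.endpoint l' hl' v hv ((hPS l' hl' v).2 ⟨hv, hvS⟩).2

theorem IsMaxStableIn.exists_isBEPartitionOn_of_peel {S U L : Set V}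
    (hS : IsMaxStableIn A S U) {l : List V} {s : V} (hl : IsDiPath A l)
    (hlL : ∀ v, v ∈ l ↔ v ∈ L) (hLU : L ⊆ U) (hLS : ∀ v ∈ L, v ∈ S ↔ v = s)
    (hend : l.head? = some s ∨ l.getLast? = some s)
    (hcard : ∀ T ⊆ U \ L, IsStable A T → T.ncard < S.ncard) (hrest : BEPropertyOn A (U \ L)) :
    ∃ P, IsBEPartitionOn A S U P := by
  have hsL : s ∈ L := (hlL s).1 (hend.elim List.mem_of_mem_head? List.mem_of_mem_getLast?)
  have hsS : s ∈ S := (hLS s hsL).2 rfl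
  have hS' : IsMaxStableIn A (S \ {s}) (U \ L) := by
    refine ⟨fun v ⟨hvS, hvs⟩ => ⟨hS.subset hvS, fun hvL => hvs ((hLS v hvL).1 hvS)⟩,
      hS.isStable.mono Set.sdiff_subset, fun T hT hTst => ?_⟩
    have := hcard T hT hTst
    rw [Set.ncard_sdiff_singleton_of_mem hsS]
    omega
  obtain ⟨P, hP⟩ := hrest _ hS'
  exact ⟨_, hP.insert hl hlL hLU hLS hend⟩

lemma exists_isDiPath_pair {a b : V} (hab : DAdj A a b) (hne : a ≠ b) :
    ∃ l, IsDiPath A l ∧ (∀ v, v ∈ l ↔ v ∈ ({a, b} : Set V)) ∧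
      ∀ v ∈ ({a, b} : Set V), l.head? = some v ∨ l.getLast? = some v := by
  rcases hab with h | h
  · exact ⟨[a, b], ⟨by simp, by simpa, List.isChain_pair.2 h⟩, by simp, by simp⟩
  · exact ⟨[b, a], ⟨by simp, by simpa using hne.symm, List.isChain_pair.2 h⟩, by simp [or_comm],
      by simp⟩

end Digraph

section Embedding

variable {α β : Type*} {A : V → V → Prop} {e : α → V}

lemma Function.Injective.existsUnique_comp_iff {f : α → β} (hf : f.Injective) {p : β → Prop}
    (hp : ∀ b, p b → b ∈ Set.range f) : (∃! b, p b) ↔ ∃! a, p (f a) := by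
  constructor
  · rintro ⟨b, hb, huniq⟩
    obtain ⟨a, rfl⟩ := hp b hb
    exact ⟨a, hb, fun a' ha' => hf (huniq _ ha')⟩
  · rintro ⟨a, ha, huniq⟩
    refine ⟨f a, ha, fun b hb => ?_⟩
    obtain ⟨a', rfl⟩ := hp b hb
    rw [huniq a' hb]

lemma isStable_image_iff (he : e.Injective) {T : Set α} :
    IsStable A (e '' T) ↔ IsStable (fun a b => A (e a) (e b)) T := by
  simp only [IsStable, Set.forall_mem_image, he.ne_iff]
  rfl

lemma isMaxStableIn_image_iff (he : e.Injective) {S U : Set α} :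
    IsMaxStableIn A (e '' S) (e '' U) ↔ IsMaxStableIn (fun a b => A (e a) (e b)) S U := by
  constructor
  · rintro ⟨hSU, hS, hmax⟩
    refine ⟨(Set.image_subset_image_iff he).1 hSU, (isStable_image_iff he).1 hS,
      fun T hTU hT => ?_⟩
    simpa only [Set.ncard_image_of_injective _ he] using
      hmax _ (Set.image_mono hTU) ((isStable_image_iff he).2 hT)
  · rintro ⟨hSU, hS, hmax⟩
    refine ⟨Set.image_mono hSU, (isStable_image_iff he).2 hS, fun T hTU hT => ?_⟩
    obtain ⟨T, hT'U, rfl⟩ := Set.subset_image_iff.1 hTU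
    simpa only [Set.ncard_image_of_injective _ he] using
      hmax T hT'U ((isStable_image_iff he).1 hT)

lemma isDiPath_map_iff (he : e.Injective) {l : List α} :
    IsDiPath A (l.map e) ↔ IsDiPath (fun a b => A (e a) (e b)) l :=
  and_congr (by simp) (and_congr (List.nodup_map_iff he) (List.isChain_map e))

lemma isBEPartitionOn_image_iff (he : e.Injective) {S U : Set α} {P : Set (List α)} :
    IsBEPartitionOn A (e '' S) (e '' U) (List.map e '' P) ↔
      IsBEPartitionOn (fun a b => A (e a) (e b)) S U P := by
  have hmap : (List.map e).Injective := List.map_injective_iff.2 he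
  have hpaths : ∀ v : α, (∃! l, l ∈ List.map e '' P ∧ e v ∈ l) ↔ ∃! l, l ∈ P ∧ v ∈ l := by
    intro v
    rw [hmap.existsUnique_comp_iff (fun l hl => Set.image_subset_range _ _ hl.1)]
    simp only [hmap.mem_set_image, List.mem_map_of_injective he]
  have hmem : ∀ l : List α, (∃! s, s ∈ l.map e ∧ s ∈ e '' S) ↔ ∃! s, s ∈ l ∧ s ∈ S := by
    intro l
    rw [he.existsUnique_comp_iff (fun s hs => Set.image_subset_range _ _ hs.2)]
    simp only [he.mem_set_image, List.mem_map_of_injective he]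
  constructor
  · rintro ⟨h1, h2, h3, h4, h5⟩
    refine ⟨fun l hl => ?_, fun l hl v hv => ?_, fun v hv => ?_, fun l hl => ?_,
      fun l hl s hs hsS => ?_⟩
    · exact (isDiPath_map_iff he).1 (h1 _ (Set.mem_image_of_mem _ hl))
    · exact he.mem_set_image.1 (h2 _ (Set.mem_image_of_mem _ hl) _ (List.mem_map_of_mem hv))
    · exact (hpaths v).1 (h3 _ (Set.mem_image_of_mem _ hv))
    · exact (hmem l).1 (h4 _ (Set.mem_image_of_mem _ hl))
    · simpa [List.head?_map, List.getLast?_map, he.eq_iff] using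
        h5 _ (Set.mem_image_of_mem _ hl) _ (List.mem_map_of_mem hs) (Set.mem_image_of_mem _ hsS)
  · rintro ⟨h1, h2, h3, h4, h5⟩
    refine ⟨?_, ?_, ?_, ?_, ?_⟩
    · rintro _ ⟨l, hl, rfl⟩
      exact (isDiPath_map_iff he).2 (h1 l hl)
    · rintro _ ⟨l, hl, rfl⟩ v hv
      obtain ⟨a, ha, rfl⟩ := List.mem_map.1 hv
      exact Set.mem_image_of_mem _ (h2 l hl a ha)
    · rintro _ ⟨v, hv, rfl⟩
      exact (hpaths v).2 (h3 v hv)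
    · rintro _ ⟨l, hl, rfl⟩
      exact (hmem l).2 (h4 l hl)
    · rintro _ ⟨l, hl, rfl⟩ _ hs ⟨s, hsS, rfl⟩
      simpa [List.head?_map, List.getLast?_map, he.eq_iff] using
        h5 l hl s ((List.mem_map_of_injective he).1 hs) hsS

lemma isSourceOrSink_comp_iff (he : e.Surjective) {a : α} :
    IsSourceOrSink (fun a b => A (e a) (e b)) a ↔ IsSourceOrSink A (e a) :=
  or_congr (he.forall (p := fun v => ¬ A v (e a))).symm (he.forall (p := fun v => ¬ A (e a) v)).symm

lemma BEPropertyOn.image (he : e.Injective) {I : Set α}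
    (h : BEPropertyOn (fun a b => A (e a) (e b)) I) : BEPropertyOn A (e '' I) := by
  intro S hS
  obtain ⟨S, -, rfl⟩ := Set.subset_image_iff.1 hS.subset
  obtain ⟨P, hP⟩ := h S ((isMaxStableIn_image_iff he).1 hS)
  exact ⟨_, (isBEPartitionOn_image_iff he).2 hP⟩

lemma BEPropertyOn.beProperty {W : Set V} (h : BEPropertyOn A W) :
    BEProperty (fun a b : W => A a.1 b.1) := by
  intro S hS
  have hmax := (isMaxStableIn_image_iff Subtype.val_injective).2 hS.isMaxStableIn_univ
  rw [Subtype.coe_image_univ] at hmax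
  obtain ⟨P, hP⟩ := h _ hmax
  have hlift : List.map Subtype.val '' (List.map Subtype.val ⁻¹' P) = P :=
    Set.image_preimage_eq_of_subset fun l hl => by
      rw [Set.range_list_map_coe]
      exact hP.mem l hl
  refine ⟨List.map Subtype.val ⁻¹' P,
    ((isBEPartitionOn_image_iff Subtype.val_injective).1 ?_).isBEPartition⟩
  rwa [Subtype.coe_image_univ, hlift]

end Embedding

lemma ZMod.natCast_ne_zero_of_pos_of_lt {n k : ℕ} (hk : 0 < k) (hkn : k < n) :
    (k : ZMod n) ≠ 0 := by
  rw [Ne, ZMod.natCast_eq_zero_iff]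
  exact fun h => absurd (Nat.le_of_dvd hk h) (by omega)

lemma ZMod.exists_mem_sub_one_notMem {n : ℕ} [NeZero n] {I : Set (ZMod n)} (hne : I.Nonempty)
    (hI : I ≠ Set.univ) : ∃ i ∈ I, i - 1 ∉ I := by
  by_contra! h
  obtain ⟨i, hi⟩ := hne
  have hsub : ∀ k : ℕ, i - k ∈ I := by
    intro k
    induction k with
    | zero => simpa
    | succ k ih => simpa [sub_add_eq_sub_sub] using h _ ih
  exact hI (Set.eq_univ_of_forall fun j => by simpa using hsub (i - j).val)

def UnderlyingIsStdCycle {n : ℕ} (A : ZMod n → ZMod n → Prop) : Prop :=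
  ∀ i j, DAdj A i j ↔ j = i + 1 ∨ i = j + 1

namespace UnderlyingIsStdCycle

variable {n : ℕ} {A : ZMod n → ZMod n → Prop}

lemma self_ne_add_one (hn : 3 ≤ n) (i : ZMod n) : i ≠ i + 1 := by
  have : ((1 : ℕ) : ZMod n) ≠ 0 := ZMod.natCast_ne_zero_of_pos_of_lt one_pos (by omega)
  intro h
  exact this (by push_cast; linear_combination -h)

lemma sub_one_ne_add_one (hn : 3 ≤ n) (i : ZMod n) : i - 1 ≠ i + 1 := by
  have : ((2 : ℕ) : ZMod n) ≠ 0 := ZMod.natCast_ne_zero_of_pos_of_lt two_pos (by omega)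
  intro h
  exact this (by push_cast; linear_combination -h)

lemma dAdj_add_one (hA : UnderlyingIsStdCycle A) (i : ZMod n) : DAdj A i (i + 1) :=
  (hA i (i + 1)).2 (Or.inl rfl)

lemma not_dAdj (hA : UnderlyingIsStdCycle A) {T : Set (ZMod n)} {i : ZMod n}
    (h1 : i + 1 ∉ T) (h2 : i - 1 ∉ T) : ∀ j ∈ T, ¬ DAdj A i j := by
  intro j hj hij
  rcases (hA i j).1 hij with rfl | rfl
  · exact h1 hj
  · exact h2 (by simpa using hj)

lemma add_one_notMem (hA : UnderlyingIsStdCycle A) (hn : 3 ≤ n) {T : Set (ZMod n)}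
    (hT : IsStable A T) {i : ZMod n} (hi : i ∈ T) : i + 1 ∉ T :=
  fun hi1 => hT i hi (i + 1) hi1 (self_ne_add_one hn i) (hA.dAdj_add_one i)

lemma exists_isDiPath_triple (hA : UnderlyingIsStdCycle A) (hn : 3 ≤ n) {c : ZMod n}
    (hc : ¬ IsSourceOrSink A c) :
    ∃ l, IsDiPath A l ∧ (∀ v, v ∈ l ↔ v ∈ ({c - 1, c, c + 1} : Set (ZMod n))) ∧
      ∀ v ∈ ({c - 1, c + 1} : Set (ZMod n)), l.head? = some v ∨ l.getLast? = some v := by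
  obtain ⟨⟨u, hu⟩, ⟨w, hw⟩⟩ : (∃ u, A u c) ∧ ∃ w, A c w := by
    simpa [IsSourceOrSink, IsSource, IsSink, not_or] using hc
  have hin : A (c - 1) c ∨ A (c + 1) c := by
    rcases (hA u c).1 (Or.inl hu) with rfl | rfl
    · exact Or.inl (by simpa using hu)
    · exact Or.inr hu
  have hout : A c (c - 1) ∨ A c (c + 1) := by
    rcases (hA c w).1 (Or.inl hw) with rfl | rfl
    · exact Or.inr hw
    · exact Or.inl (by simpa using hw)
  have hprev : DAdj A (c - 1) c := by simpa using hA.dAdj_add_one (c - 1)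
  have hnext : DAdj A c (c + 1) := hA.dAdj_add_one c
  have h01 := self_ne_add_one hn (c - 1)
  have h12 := self_ne_add_one hn c
  have h02 := sub_one_ne_add_one hn c
  simp only [sub_add_cancel] at h01
  have : (A (c - 1) c ∧ A c (c + 1)) ∨ (A (c + 1) c ∧ A c (c - 1)) := by
    unfold DAdj at hprev hnext
    tauto
  rcases this with ⟨ha, hb⟩ | ⟨ha, hb⟩
  · refine ⟨[c - 1, c, c + 1], ⟨by simp, by simp [h01, h12, h02],
      List.isChain_cons_cons.2 ⟨ha, List.isChain_pair.2 hb⟩⟩, by simp, by simp⟩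
  · refine ⟨[c + 1, c, c - 1], ⟨by simp, by simp [h01.symm, h12.symm, h02.symm],
      List.isChain_cons_cons.2 ⟨ha, List.isChain_pair.2 hb⟩⟩, by simp; tauto, by simp⟩

variable [NeZero n]

lemma two_mul_ncard (hA : UnderlyingIsStdCycle A) (hn : 3 ≤ n) {T : Set (ZMod n)}
    (hT : IsStable A T) : 2 * T.ncard = (T ∪ (· + 1) '' T).ncard := by
  rw [Set.ncard_union_eq, Set.ncard_image_of_injective _ (add_left_injective 1)]
  · ring
  · rw [Set.disjoint_left]
    rintro _ hi ⟨j, hj, rfl⟩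
    exact hA.add_one_notMem hn hT hj hi

lemma two_mul_ncard_lt (hA : UnderlyingIsStdCycle A) (hn : 3 ≤ n) {T : Set (ZMod n)}
    (hT : IsStable A T) {g : ZMod n} (hg : g ∉ T) (hg1 : g + 1 ∉ T) : 2 * T.ncard < n := by
  rw [hA.two_mul_ncard hn hT]
  refine lt_of_lt_of_eq (Set.ncard_lt_ncard (Set.ssubset_univ_iff.2 fun h => ?_))
    (by rw [Set.ncard_univ, Nat.card_zmod])
  rcases (h ▸ Set.mem_univ (g + 1) : g + 1 ∈ T ∪ (· + 1) '' T) with h' | ⟨j, hj, hjg⟩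
  · exact hg1 h'
  · exact hg (add_right_cancel hjg ▸ hj)

lemma two_mul_ncard_eq (hA : UnderlyingIsStdCycle A) (hn : 3 ≤ n) {T : Set (ZMod n)}
    (hT : IsStable A T) (hcover : ∀ i, i ∈ T ∨ i + 1 ∈ T) : 2 * T.ncard = n := by
  have hcup : T ∪ (· + 1) '' T = Set.univ := by
    refine Set.eq_univ_of_forall fun i => ?_
    rcases hcover (i - 1) with h | h
    · exact Or.inr ⟨i - 1, h, sub_add_cancel i 1⟩
    · exact Or.inl (by simpa using h)
  rw [hA.two_mul_ncard hn hT, hcup, Set.ncard_univ, Nat.card_zmod]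

lemma exists_isStable_two_mul_ncard_eq (hA : UnderlyingIsStdCycle A) (hn : 3 ≤ n)
    (heven : Even n) : ∃ T, IsStable A T ∧ 2 * T.ncard = n := by
  set f := ZMod.castHom (even_iff_two_dvd.1 heven) (ZMod 2)
  have hT : IsStable A {i | f i = 0} := by
    intro i hi j hj _ hij
    rcases (hA i j).1 hij with rfl | rfl
    · simp_all [map_add]
    · simp_all [map_add]
  refine ⟨_, hT, hA.two_mul_ncard_eq hn hT fun i => ?_⟩
  have : ∀ a : ZMod 2, a = 0 ∨ a + 1 = 0 := by decide
  simpa [map_add] using this (f i)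

theorem bePropertyOn_of_ne_univ (hA : UnderlyingIsStdCycle A) (hn : 3 ≤ n) {I : Set (ZMod n)}
    (hI : I ≠ Set.univ) : BEPropertyOn A I := by
  induction hk : I.ncard using Nat.strong_induction_on generalizing I with
  | _ k ih =>
  intro S hS
  rcases I.eq_empty_or_nonempty with rfl | hne
  · exact ⟨∅, by constructor <;> simp⟩
  obtain ⟨i, hiI, hi⟩ := ZMod.exists_mem_sub_one_notMem hne hI
  have hrest : ∀ L ⊆ I, i ∈ L → BEPropertyOn A (I \ L) := fun L _ hiL =>
    ih _ (hk ▸ Set.ncard_lt_ncard ((Set.ssubset_iff_of_subset Set.sdiff_subset).2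
      ⟨i, hiI, fun h => h.2 hiL⟩)) (fun h => (h ▸ Set.mem_univ i : i ∈ I \ L).2 hiL) rfl
  have hcard : ∀ L ⊆ I, i ∈ L → (i + 1 ∈ I → i + 1 ∈ L) →
      ∀ T ⊆ I \ L, IsStable A T → T.ncard < S.ncard := fun L _ hiL hi1L T hT hTst =>
    hS.ncard_lt (hT.trans Set.sdiff_subset) hTst hiI (fun h => (hT h).2 hiL)
      (hA.not_dAdj (fun h => (hT h).2 (hi1L (hT h).1)) (fun h => hi (hT h).1))
  by_cases hi1 : i + 1 ∈ I
  · have hLI : {i, i + 1} ⊆ I := Set.insert_subset hiI (Set.singleton_subset_iff.2 hi1)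
    obtain ⟨l, hl, hlL, hend⟩ := exists_isDiPath_pair (hA.dAdj_add_one i) (self_ne_add_one hn i)
    have hS_pair : i ∈ S ∨ i + 1 ∈ S := by
      by_contra! h
      exact h.1 (hS.mem_of_forall_not_dAdj hiI (hA.not_dAdj h.2 fun h' => hi (hS.subset h')))
    have hS_add_one : ∀ {j}, j ∈ S → j + 1 ∉ S := hA.add_one_notMem hn hS.isStable
    have hne := self_ne_add_one hn i
    rcases hS_pair with hiS | hi1S
    · refine hS.exists_isBEPartitionOn_of_peel hl hlL hLI ?_ (hend i (by simp))
        (hcard _ hLI (by simp) (by simp)) (hrest _ hLI (by simp))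
      rintro v (rfl | rfl)
      · simp [hiS]
      · simp [hS_add_one hiS, hne.symm]
    · refine hS.exists_isBEPartitionOn_of_peel hl hlL hLI ?_ (hend (i + 1) (by simp))
        (hcard _ hLI (by simp) (by simp)) (hrest _ hLI (by simp))
      rintro v (rfl | rfl)
      · simpa [hne] using fun h => hS_add_one h hi1S
      · simp [hi1S]
  · have hiS : i ∈ S := hS.mem_of_forall_not_dAdj hiI
      (hA.not_dAdj (fun h => hi1 (hS.subset h)) fun h => hi (hS.subset h))
    have hLI : {i} ⊆ I := Set.singleton_subset_iff.2 hiI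
    exact hS.exists_isBEPartitionOn_of_peel (l := [i]) (s := i)
      ⟨by simp, by simp, List.isChain_singleton i⟩ (by simp) hLI (by simp [hiS]) (by simp)
      (hcard _ hLI rfl (absurd · hi1)) (hrest _ hLI rfl)

lemma bePropertyOn_univ_sdiff (hA : UnderlyingIsStdCycle A) (hn : 3 ≤ n) {L : Set (ZMod n)}
    (hL : L.Nonempty) : BEPropertyOn A (Set.univ \ L) :=
  hA.bePropertyOn_of_ne_univ hn (Set.compl_eq_univ_sdiff L ▸ Set.compl_ne_univ.2 hL)

lemma exists_isBEPartitionOn_of_triple (hA : UnderlyingIsStdCycle A) (hn : 3 ≤ n)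
    {S : Set (ZMod n)} (hS : IsMaxStableIn A S Set.univ) {c s t : ZMod n}
    (hc : ¬ IsSourceOrSink A c) (hcS : c ∉ S)
    (hst : s = c - 1 ∧ t = c + 1 ∨ s = c + 1 ∧ t = c - 1) (hsS : s ∈ S) (htS : t ∉ S) :
    ∃ P, IsBEPartitionOn A S Set.univ P := by
  obtain ⟨l, hl, hlL, hend⟩ := hA.exists_isDiPath_triple hn hc
  have hL : ({c - 1, c, c + 1} : Set (ZMod n)) = {s, c, t} := by
    rcases hst with ⟨rfl, rfl⟩ | ⟨rfl, rfl⟩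
    · rfl
    · ext
      simp only [Set.mem_insert_iff, Set.mem_singleton_iff]
      tauto
  have hnotS : ∀ v ∉ S, v ∈ S ↔ v = s := fun v hv => iff_of_false hv fun h => hv (h ▸ hsS)
  rw [hL] at hlL
  refine hS.exists_isBEPartitionOn_of_peel hl hlL (Set.subset_univ _) ?_ (hend s ?_) ?_
    (hA.bePropertyOn_univ_sdiff hn ⟨c, by simp⟩)
  · rintro v (rfl | rfl | rfl)
    exacts [iff_of_true hsS rfl, hnotS _ hcS, hnotS _ htS]
  · rcases hst with ⟨rfl, -⟩ | ⟨rfl, -⟩ <;> simp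
  · intro T hT hTst
    refine hS.ncard_lt (w := c) (Set.subset_univ T) hTst trivial
      (fun h => (hT h).2 (by simp))
      (hA.not_dAdj (fun h => (hT h).2 ?_) (fun h => (hT h).2 ?_)) <;>
    rcases hst with ⟨rfl, rfl⟩ | ⟨rfl, rfl⟩ <;> simp

theorem bePropertyOn_univ (hA : UnderlyingIsStdCycle A) (hn : 3 ≤ n)
    (hblock : ∀ g, IsSourceOrSink A g → IsSourceOrSink A (g + 1) → Even n) :
    BEPropertyOn A Set.univ := by
  intro S hS
  by_cases hgap : ∃ g, g ∉ S ∧ g + 1 ∉ S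
  · obtain ⟨g, hg, hg1⟩ := hgap
    have hprev : g - 1 ∈ S := by_contra fun h =>
      hg (hS.mem_of_forall_not_dAdj trivial (hA.not_dAdj hg1 h))
    have hnext : g + 1 + 1 ∈ S := by_contra fun h =>
      hg1 (hS.mem_of_forall_not_dAdj trivial (hA.not_dAdj h (by simpa using hg)))
    by_cases hc : IsSourceOrSink A g
    · by_cases hc1 : IsSourceOrSink A (g + 1)
      · obtain ⟨T, hT, hTn⟩ := hA.exists_isStable_two_mul_ncard_eq hn (hblock g hc hc1)
        have := hS.ncard_le T (Set.subset_univ T) hT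
        have := hA.two_mul_ncard_lt hn hS.isStable hg hg1
        omega
      · exact hA.exists_isBEPartitionOn_of_triple hn hS hc1 hg1 (Or.inr ⟨rfl, by simp⟩) hnext hg
    · exact hA.exists_isBEPartitionOn_of_triple hn hS hc hg (Or.inl ⟨rfl, rfl⟩) hprev hg1
  · push Not at hgap
    have hSn : 2 * S.ncard = n :=
      hA.two_mul_ncard_eq hn hS.isStable fun i => (em (i ∈ S)).imp_right (hgap i)
    obtain ⟨g, hg⟩ : S.Nonempty := Set.nonempty_of_ncard_ne_zero (by omega)
    have hne := self_ne_add_one hn g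
    obtain ⟨l, hl, hlL, hend⟩ := exists_isDiPath_pair (hA.dAdj_add_one g) hne
    refine hS.exists_isBEPartitionOn_of_peel hl hlL (Set.subset_univ _) ?_ (hend g (by simp)) ?_
      (hA.bePropertyOn_univ_sdiff hn ⟨g, by simp⟩)
    · rintro v (rfl | rfl)
      · simp [hg]
      · simp [hA.add_one_notMem hn hS.isStable hg, hne.symm]
    · intro T hT hTst
      have := hA.two_mul_ncard_lt hn hTst (g := g) (fun h => (hT h).2 (by simp))
        (fun h => (hT h).2 (by simp))
      omega

end UnderlyingIsStdCycle

lemma UnderlyingIsStdCycle.even_of_isSourceOrSink {A : V → V → Prop} {n : ℕ} (hn : 3 ≤ n)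
    {x : ZMod n → V} (hx : x.Bijective) (hA : UnderlyingIsStdCycle fun i j => A (x i) (x j))
    (hB : ¬ IsBlockingOddCycle (fun a b : ↥(Set.univ : Set V) => A a.1 b.1)) {g : ZMod n}
    (hg : IsSourceOrSink (fun i j => A (x i) (x j)) g)
    (hg1 : IsSourceOrSink (fun i j => A (x i) (x j)) (g + 1)) : Even n := by
  by_contra hodd
  obtain ⟨k, rfl⟩ := Nat.not_even_iff_odd.1 hodd
  have hval : (Subtype.val : ↥(Set.univ : Set V) → V).Surjective := fun v => ⟨⟨v, trivial⟩, rfl⟩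
  refine hB ⟨k, fun i => ⟨x (i + g), Set.mem_univ _⟩, by omega,
    (Equiv.Set.univ V).symm.bijective.comp (hx.comp (Equiv.addRight g).bijective),
    fun i j => (hA (i + g) (j + g)).trans ?_, ?_, ?_⟩
  · simp only [add_right_comm _ g 1, add_left_inj]
  · show IsSourceOrSink _ (⟨x (0 + g), _⟩ : ↥(Set.univ : Set V))
    rwa [isSourceOrSink_comp_iff hval, zero_add, ← isSourceOrSink_comp_iff hx.2]
  · show IsSourceOrSink _ (⟨x (1 + g), _⟩ : ↥(Set.univ : Set V))
    rwa [isSourceOrSink_comp_iff hval, add_comm, ← isSourceOrSink_comp_iff hx.2]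

theorem cycle_BEDiperfect_general {V : Type*} (A : V → V → Prop)
    (hcyc : UnderlyingIsCycle A)
    (hB : ¬ ∃ W : Set V, IsBlockingOddCycle (fun a b : W => A a.1 b.1)) :
    BEDiperfect A := by
  obtain ⟨n, x, hn, hx, hadj⟩ := hcyc
  have : NeZero n := ⟨by omega⟩
  have hA : UnderlyingIsStdCycle fun i j => A (x i) (x j) := hadj
  intro W
  refine BEPropertyOn.beProperty ?_
  rw [← hx.2.image_preimage W]
  refine BEPropertyOn.image hx.1 ?_
  by_cases hW : x ⁻¹' W = Set.univ
  · rw [hW]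
    exact hA.bePropertyOn_univ hn fun g =>
      hA.even_of_isSourceOrSink hn hx fun h => hB ⟨Set.univ, h⟩
  · exact hA.bePropertyOn_of_ne_univ hn hW

/-- A digraph with no induced blocking odd cycle whose underlying graph is a cycle is
BE-diperfect. -/
theorem cycle_BEDiperfect {V : Type*} [Finite V] (A : V → V → Prop)
    (hirr : ∀ v, ¬ A v v) (hcyc : UnderlyingIsCycle A)
    (hB : ¬ ∃ W : Set V, IsBlockingOddCycle (fun a b : W => A a.1 b.1)) :
    BEDiperfect A :=
  cycle_BEDiperfect_general A hcyc hB
end
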